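/- Let α ∈ ℂ be a root of (a+2)x⁴ + 1 = 0 (so [α:α:1] lies on C_{a,0}). Then H_F(α,α,1) = −144(a−6)(a+2)α⁴, where H_F is the Hessian determinant of F(x,y,z) = x⁴ + y⁴ + z⁴ + a x² y². Consequently, [α:α:1] is a flex point of C_{a,0} if and only if a = 6. -/

import Mathlib

/-!
Since `z` enters `F` only through `z⁴`, the Hessian of `F` is block diagonal: a `2 × 2` block in
`x, y` and the entry `12 z²`. At `(t, t, 1)` the block has determinant
`((12 + 2a)² - 16a²) t⁴ = -12 (a - 6)(a + 2) t⁴`, giving `H = -144 (a - 6)(a + 2) t⁴`; when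
`(a + 2) α⁴ = -1` this is `144 (a - 6)`.
-/

open MvPolynomial

/-- The Kuribayashi quartic with one parameter: `F = x⁴ + y⁴ + z⁴ + a x² y²`. -/
noncomputable def Fq (a : ℂ) : MvPolynomial (Fin 3) ℂ :=
  X 0 ^ 4 + X 1 ^ 4 + X 2 ^ 4 + C a * X 0 ^ 2 * X 1 ^ 2

/-- The Hessian determinant of `Fq a`. -/
noncomputable def Hq (a : ℂ) : MvPolynomial (Fin 3) ℂ :=
  Matrix.det (Matrix.of fun i j : Fin 3 => pderiv i (pderiv j (Fq a)))

@[simp]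
theorem MvPolynomial.pderiv_ofNat {σ R : Type*} [CommSemiring R] (i : σ) (n : ℕ)
    [n.AtLeastTwo] : pderiv i (no_index (OfNat.ofNat n : MvPolynomial σ R)) = 0 :=
  (pderiv i).map_natCast n

theorem hessian_Fq (a : ℂ) :
    Matrix.of (fun i j : Fin 3 => pderiv i (pderiv j (Fq a))) =
      !![12 * X 0 ^ 2 + 2 * C a * X 1 ^ 2, 4 * C a * X 0 * X 1, 0;
         4 * C a * X 0 * X 1, 12 * X 1 ^ 2 + 2 * C a * X 0 ^ 2, 0;
         0, 0, 12 * X 2 ^ 2] := by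
  refine Matrix.ext fun i j => ?_
  fin_cases i <;> fin_cases j <;>
    simp only [Fq, Matrix.of_apply, Matrix.cons_val', Matrix.cons_val, Matrix.cons_val_fin_one,
      map_add, map_zero, Derivation.leibniz, Derivation.leibniz_pow, derivation_C, pderiv_X,
      pderiv_ofNat, Pi.single_apply, Fin.isValue, Fin.reduceFinMk, Fin.reduceEq, ↓reduceIte,
      smul_eq_mul, nsmul_eq_mul, Nat.cast_ofNat, mul_ite, mul_one, mul_zero] <;>
    ring

theorem Hq_eq (a : ℂ) :
    Hq a = 12 * X 2 ^ 2 *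
      ((12 * X 0 ^ 2 + 2 * C a * X 1 ^ 2) * (12 * X 1 ^ 2 + 2 * C a * X 0 ^ 2)
        - (4 * C a * X 0 * X 1) ^ 2) := by
  rw [Hq, hessian_Fq, Matrix.det_fin_three]
  simp only [Matrix.of_apply, Matrix.cons_val', Matrix.cons_val, Matrix.cons_val_fin_one]
  ring

theorem eval_Hq_diag (a t : ℂ) :
    eval ![t, t, 1] (Hq a) = -144 * (a - 6) * (a + 2) * t ^ 4 := by
  simp only [Hq_eq, map_mul, map_sub, map_add, map_pow, eval_ofNat, eval_X, eval_C,
    Matrix.cons_val]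
  ring

theorem alpha_alpha_one_flex_iff_general (a α : ℂ)
    (hα : (a + 2) * α ^ 4 + 1 = 0) :
    eval ![α, α, 1] (Hq a) = -144 * (a - 6) * (a + 2) * α ^ 4 ∧
    (eval ![α, α, 1] (Hq a) = 0 ↔ a = 6) := by
  refine ⟨eval_Hq_diag a α, ?_⟩
  have hH : eval ![α, α, 1] (Hq a) = 144 * (a - 6) := by
    rw [eval_Hq_diag]
    linear_combination (-144 * (a - 6)) * hα
  rw [hH, mul_eq_zero, sub_eq_zero]
  simp

/-- For `α` a root of `(a+2)x⁴ + 1 = 0`, we have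
`H_F(α,α,1) = -144(a-6)(a+2)α⁴`, and `[α:α:1]` is a flex of `C_{a,0}` iff `a = 6`. -/
theorem alpha_alpha_one_flex_iff (a α : ℂ) (ha : (a ^ 2 - 1) * (a ^ 2 - 4) ≠ 0)
    (hα : (a + 2) * α ^ 4 + 1 = 0) :
    eval ![α, α, 1] (Hq a) = -144 * (a - 6) * (a + 2) * α ^ 4 ∧
    (eval ![α, α, 1] (Hq a) = 0 ↔ a = 6) :=
  alpha_alpha_one_flex_iff_general a α hα
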